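/- For every real α and every a ≠ 0, the maximally symmetric triple (a, a, a) (structure constants of a round metric on SU(2)) is a fixed point of the RG-2 bracket flow system if and only if αa² = −8; in particular such a steady soliton exists exactly when α < 0, with a = ±√(−8/α). -/

import Mathlib

/-!
On the diagonal every `Qᵢ` equals `a²`, so all three equations collapse to
`(a³/2)(1 + αa²/8) = 0`; for `a ≠ 0` this is `αa² = −8`, which has real solutions exactly
when `α < 0`, namely `a = ±√(−8/α)`.
-/

noncomputable section

/-- `Q₁ = (a₂−a₃)² − 3a₁² + 2a₁a₂ + 2a₁a₃`. -/
def Q1 (a1 a2 a3 : ℝ) : ℝ := (a2 - a3) ^ 2 - 3 * a1 ^ 2 + 2 * a1 * a2 + 2 * a1 * a3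

/-- `Q₂ = (a₁−a₃)² − 3a₂² + 2a₂a₁ + 2a₂a₃`. -/
def Q2 (a1 a2 a3 : ℝ) : ℝ := (a1 - a3) ^ 2 - 3 * a2 ^ 2 + 2 * a2 * a1 + 2 * a2 * a3

/-- `Q₃ = (a₁−a₂)² − 3a₃² + 2a₃a₁ + 2a₃a₂`. -/
def Q3 (a1 a2 a3 : ℝ) : ℝ := (a1 - a2) ^ 2 - 3 * a3 ^ 2 + 2 * a3 * a1 + 2 * a3 * a2

/-- Right-hand side of the RG-2 bracket flow for `a₁`. -/
def F1 (α a1 a2 a3 : ℝ) : ℝ := (a1 / 2) * Q1 a1 a2 a3 * (1 + (α / 8) * Q1 a1 a2 a3)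

/-- Right-hand side of the RG-2 bracket flow for `a₂`. -/
def F2 (α a1 a2 a3 : ℝ) : ℝ := (a2 / 2) * Q2 a1 a2 a3 * (1 + (α / 8) * Q2 a1 a2 a3)

/-- Right-hand side of the RG-2 bracket flow for `a₃`. -/
def F3 (α a1 a2 a3 : ℝ) : ℝ := (a3 / 2) * Q3 a1 a2 a3 * (1 + (α / 8) * Q3 a1 a2 a3)

/-- A triple of structure constants is a fixed point of the RG-2 bracket flow
(a steady algebraic soliton of the two-loop renormalization group flow). -/
def IsFixedPoint (α a1 a2 a3 : ℝ) : Prop :=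
  F1 α a1 a2 a3 = 0 ∧ F2 α a1 a2 a3 = 0 ∧ F3 α a1 a2 a3 = 0

lemma Q1_diag (a : ℝ) : Q1 a a a = a ^ 2 := by unfold Q1; ring

lemma Q2_diag (a : ℝ) : Q2 a a a = a ^ 2 := by unfold Q2; ring

lemma Q3_diag (a : ℝ) : Q3 a a a = a ^ 2 := by unfold Q3; ring

lemma isFixedPoint_diag_iff {α a : ℝ} :
    IsFixedPoint α a a a ↔ a / 2 * a ^ 2 * (1 + α / 8 * a ^ 2) = 0 := by
  simp only [IsFixedPoint, F1, F2, F3, Q1_diag, Q2_diag, Q3_diag, and_self]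

theorem isFixedPoint_diag_iff_of_ne_zero {α a : ℝ} (ha : a ≠ 0) :
    IsFixedPoint α a a a ↔ α * a ^ 2 = -8 := by
  have hcoeff : a / 2 * a ^ 2 ≠ 0 := by positivity
  rw [isFixedPoint_diag_iff, mul_eq_zero, or_iff_right hcoeff]
  exact ⟨fun h => by linear_combination 8 * h, fun h => by linear_combination h / 8⟩

lemma neg_of_mul_sq_eq_neg {α a c : ℝ} (ha : a ≠ 0) (hc : c < 0) (h : α * a ^ 2 = c) :
    α < 0 := by
  have : 0 < a ^ 2 := by positivity
  nlinarith

lemma mul_sq_eq_iff_eq_sqrt_or_eq_neg_sqrt {α a c : ℝ} (hα : α ≠ 0) (hc : 0 ≤ c / α) :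
    α * a ^ 2 = c ↔ a = √(c / α) ∨ a = -√(c / α) := by
  rw [← sq_eq_sq_iff_eq_or_eq_neg, Real.sq_sqrt hc, eq_div_iff hα, mul_comm]

/-- for every `α` and `a ≠ 0`, the maximally symmetric triple `(a,a,a)`
(round metric on `SU(2)`) is a fixed point of the RG-2 bracket flow iff `αa² = −8`; in
particular such a steady soliton exists exactly when `α < 0`, with `a = ±√(−8/α)`. -/
theorem stmt7 (α : ℝ) :
    (∀ a : ℝ, a ≠ 0 → (IsFixedPoint α a a a ↔ α * a ^ 2 = -8)) ∧
    ((∃ a : ℝ, a ≠ 0 ∧ IsFixedPoint α a a a) ↔ α < 0) ∧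
    (α < 0 → ∀ a : ℝ, a ≠ 0 →
      (IsFixedPoint α a a a ↔
        a = Real.sqrt (-8 / α) ∨ a = -Real.sqrt (-8 / α))) := by
  have hroots (hα : α < 0) (a : ℝ) : α * a ^ 2 = -8 ↔ a = √(-8 / α) ∨ a = -√(-8 / α) :=
    mul_sq_eq_iff_eq_sqrt_or_eq_neg_sqrt hα.ne (div_nonneg_of_nonpos (by norm_num) hα.le)
  refine ⟨fun a ha => isFixedPoint_diag_iff_of_ne_zero ha, ⟨?_, fun hα => ?_⟩,
    fun hα a ha => (isFixedPoint_diag_iff_of_ne_zero ha).trans (hroots hα a)⟩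
  · rintro ⟨a, ha, hfix⟩
    exact neg_of_mul_sq_eq_neg ha (by norm_num) ((isFixedPoint_diag_iff_of_ne_zero ha).mp hfix)
  · have hsqrt : √(-8 / α) ≠ 0 := (Real.sqrt_pos.mpr (div_pos_of_neg_of_neg (by norm_num) hα)).ne'
    exact ⟨√(-8 / α), hsqrt,
      (isFixedPoint_diag_iff_of_ne_zero hsqrt).mpr ((hroots hα _).mpr (Or.inl rfl))⟩
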